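/- Let M, a be reals with 0 ≤ a < M, u₀ a real constant, C > 0, and g̃ : (0, π) → ℝ a C² function of θ. Let F₆ = (u₀/(C sinθ)) dθ ∧ [ √(C² + g̃²) (dt − a sin²θ dφ) + g̃ (ρ²/Δ) dr ] and j₆ = (u₀ g̃′/(C ρ² sinθ)) [ (g̃/(Δ√(C²+g̃²))) ((r²+a²)∂_t + a ∂_φ) − ∂_r ] on U. Then on U: F₆² := g^{μα}g^{νβ}F₆_{αβ}F₆_{μν} = −2u₀²/(Δ sin²θ) (so F₆ is electrically dominated, F₆² < 0 when u₀ ≠ 0), and j₆² := g_{μν} j₆^μ j₆^ν = u₀² g̃′² / ((g̃² + C²) Δ ρ² sin²θ) ≥ 0 (so the current density is spacelike wherever g̃′ ≠ 0). -/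

import Mathlib

noncomputable section

/-- Partial derivative of `f` in the coordinate direction `μ`,
coordinates `(x 0, x 1, x 2, x 3) = (t, r, θ, φ)`. -/
def pd (μ : Fin 4) (f : (Fin 4 → ℝ) → ℝ) (x : Fin 4 → ℝ) : ℝ :=
  fderiv ℝ f x (Pi.single μ 1)

/-- ρ² = r² + a² cos²θ. -/
def rho2 (a : ℝ) (x : Fin 4 → ℝ) : ℝ := (x 1) ^ 2 + a ^ 2 * Real.cos (x 2) ^ 2

/-- Δ = r² − 2Mr + a². -/
def Del (M a : ℝ) (x : Fin 4 → ℝ) : ℝ := (x 1) ^ 2 - 2 * M * (x 1) + a ^ 2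

/-- Σ² = (r²+a²)² − Δ a² sin²θ. -/
def Sig2 (M a : ℝ) (x : Fin 4 → ℝ) : ℝ :=
  ((x 1) ^ 2 + a ^ 2) ^ 2 - Del M a x * a ^ 2 * Real.sin (x 2) ^ 2

/-- The Kerr metric in Boyer–Lindquist coordinates `(t, r, θ, φ)`. -/
def kerr (M a : ℝ) (x : Fin 4 → ℝ) : Matrix (Fin 4) (Fin 4) ℝ :=
  Matrix.of fun μ ν =>
    if μ = 0 ∧ ν = 0 then -1 + 2 * M * (x 1) / rho2 a x
    else if (μ = 0 ∧ ν = 3) ∨ (μ = 3 ∧ ν = 0) then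
      -(2 * M * (x 1) * a * Real.sin (x 2) ^ 2) / rho2 a x
    else if μ = 1 ∧ ν = 1 then rho2 a x / Del M a x
    else if μ = 2 ∧ ν = 2 then rho2 a x
    else if μ = 3 ∧ ν = 3 then Sig2 M a x * Real.sin (x 2) ^ 2 / rho2 a x
    else 0

/-- The exterior Kerr domain U = {r > r₊, 0 < θ < π}. -/
def KerrExt (M a : ℝ) : Set (Fin 4 → ℝ) :=
  {x | M + Real.sqrt (M ^ 2 - a ^ 2) < x 1 ∧ 0 < x 2 ∧ x 2 < Real.pi}

/-- `wedge μ ν f` is the antisymmetric matrix of the 2-form `f dx^μ ∧ dx^ν`. -/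
def wedge (μ ν : Fin 4) (f : ℝ) : Matrix (Fin 4) (Fin 4) ℝ :=
  Matrix.of fun i j => if i = μ ∧ j = ν then f else if i = ν ∧ j = μ then -f else 0

/-- A 2-form `F` is closed on `S`: ∂_μ F_{νλ} + ∂_ν F_{λμ} + ∂_λ F_{μν} = 0. -/
def Closed2Form (F : (Fin 4 → ℝ) → Matrix (Fin 4) (Fin 4) ℝ) (S : Set (Fin 4 → ℝ)) : Prop :=
  ∀ x ∈ S, ∀ μ ν lam : Fin 4,
    pd μ (fun y => F y ν lam) x + pd ν (fun y => F y lam μ) x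
      + pd lam (fun y => F y μ ν) x = 0

/-- Current density j^μ = (ρ²sinθ)⁻¹ ∂_ν (ρ²sinθ g^{μα} g^{νβ} F_{αβ}). -/
def current (M a : ℝ) (F : (Fin 4 → ℝ) → Matrix (Fin 4) (Fin 4) ℝ)
    (x : Fin 4 → ℝ) (μ : Fin 4) : ℝ :=
  (rho2 a x * Real.sin (x 2))⁻¹ *
    ∑ ν : Fin 4, pd ν (fun y => rho2 a y * Real.sin (y 2) *
      ∑ i : Fin 4, ∑ j : Fin 4, (kerr M a y)⁻¹ μ i * (kerr M a y)⁻¹ ν j * F y i j) x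

/-- `F` is force-free on `S`: F_{μν} j^ν = 0 for the current density `j` of `F`. -/
def ForceFree (M a : ℝ) (F : (Fin 4 → ℝ) → Matrix (Fin 4) (Fin 4) ℝ)
    (S : Set (Fin 4 → ℝ)) : Prop :=
  ∀ x ∈ S, ∀ μ : Fin 4, ∑ ν : Fin 4, F x μ ν * current M a F x ν = 0

/-- The invariant F² = g^{μα} g^{νβ} F_{αβ} F_{μν}. -/
def Fsq (M a : ℝ) (F : (Fin 4 → ℝ) → Matrix (Fin 4) (Fin 4) ℝ) (x : Fin 4 → ℝ) : ℝ :=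
  ∑ μ : Fin 4, ∑ ν : Fin 4, ∑ i : Fin 4, ∑ j : Fin 4,
    (kerr M a x)⁻¹ μ i * (kerr M a x)⁻¹ ν j * F x i j * F x μ ν

/-- F₆ = (u₀/(C sinθ)) dθ ∧ [ √(C²+g̃²)(dt − a sin²θ dφ) + g̃ (ρ²/Δ) dr ]. -/
def F6 (M a u₀ C : ℝ) (gtil : ℝ → ℝ) (x : Fin 4 → ℝ) : Matrix (Fin 4) (Fin 4) ℝ :=
  wedge 2 0 (u₀ / (C * Real.sin (x 2)) * Real.sqrt (C ^ 2 + gtil (x 2) ^ 2))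
    + wedge 2 3 (u₀ / (C * Real.sin (x 2)) * Real.sqrt (C ^ 2 + gtil (x 2) ^ 2) *
        (-(a * Real.sin (x 2) ^ 2)))
    + wedge 2 1 (u₀ / (C * Real.sin (x 2)) * (gtil (x 2) * rho2 a x / Del M a x))

/-- j₆ = (u₀ g̃′/(C ρ² sinθ)) [ (g̃/(Δ√(C²+g̃²))) ((r²+a²)∂_t + a ∂_φ) − ∂_r ]. -/
def j6 (M a u₀ C : ℝ) (gtil : ℝ → ℝ) (x : Fin 4 → ℝ) : Fin 4 → ℝ := fun μ =>
  u₀ * deriv gtil (x 2) / (C * rho2 a x * Real.sin (x 2)) *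
    ![gtil (x 2) / (Del M a x * Real.sqrt (C ^ 2 + gtil (x 2) ^ 2)) * ((x 1) ^ 2 + a ^ 2),
      -1, 0,
      gtil (x 2) / (Del M a x * Real.sqrt (C ^ 2 + gtil (x 2) ^ 2)) * a] μ


/-!
F₆ = dθ ∧ ω with ω = E (dt − a sin²θ dφ) + B dr, where E = u₀√(C²+g̃²)/(C sinθ) and
B = u₀ g̃ ρ²/(C Δ sinθ). Since dθ is orthogonal to dt, dr, dφ, the invariant F₆² is the Gram
determinant 2 |dθ|² |ω|². In Kerr, dt − a sin²θ dφ has squared norm −ρ²/Δ and is orthogonal to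
dr; dually (r²+a²)∂_t + a ∂_φ has squared norm −Δρ² and is orthogonal to ∂_r. With |dθ|² = 1/ρ²,
|dr|² = Δ/ρ² and |∂_r|² = ρ²/Δ both invariants reduce to rational identities in which
√(C²+g̃²) occurs only squared.
-/

open Matrix Real

theorem sum_sum_mul_mul_eq_dotProduct_mulVec {n R : Type*} [Fintype n] [CommSemiring R]
    (G : Matrix n n R) (v w : n → R) :
    ∑ μ, ∑ ν, G μ ν * v μ * w ν = v ⬝ᵥ G *ᵥ w := by
  simp only [dotProduct, mulVec, Finset.mul_sum]
  exact Finset.sum_congr rfl fun _ _ => Finset.sum_congr rfl fun _ _ => by ring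

theorem sum_sum_antisymm_mul_antisymm {n R : Type*} [Fintype n] [CommRing R]
    (a b u v : n → R) :
    ∑ μ, ∑ ν, (a μ * b ν - b μ * a ν) * (u μ * v ν - v μ * u ν)
      = 2 * ((a ⬝ᵥ u) * (b ⬝ᵥ v) - (a ⬝ᵥ v) * (b ⬝ᵥ u)) := by
  have expand : ∀ μ ν, (a μ * b ν - b μ * a ν) * (u μ * v ν - v μ * u ν)
      = a μ * u μ * (b ν * v ν) - a μ * v μ * (b ν * u ν)
        - b μ * u μ * (a ν * v ν) + b μ * v μ * (a ν * u ν) := fun _ _ => by ring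
  simp only [expand, Finset.sum_add_distrib, Finset.sum_sub_distrib, ← Finset.mul_sum,
    ← Finset.sum_mul, dotProduct]
  ring

theorem sum_contract_wedge {n R : Type*} [Fintype n] [CommRing R]
    (G : Matrix n n R) (u v : n → R) :
    ∑ μ, ∑ ν, ∑ i, ∑ j, G μ i * G ν j * (u i * v j - v i * u j) * (u μ * v ν - v μ * u ν)
      = 2 * ((u ⬝ᵥ G *ᵥ u) * (v ⬝ᵥ G *ᵥ v) - (u ⬝ᵥ G *ᵥ v) * (v ⬝ᵥ G *ᵥ u)) := by
  have raise : ∀ μ ν, ∑ i, ∑ j, G μ i * G ν j * (u i * v j - v i * u j)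
      = (G *ᵥ u) μ * (G *ᵥ v) ν - (G *ᵥ v) μ * (G *ᵥ u) ν := fun μ ν => by
    simp only [mulVec, dotProduct, Finset.sum_mul_sum, ← Finset.sum_sub_distrib]
    exact Finset.sum_congr rfl fun _ _ => Finset.sum_congr rfl fun _ _ => by ring
  simp only [← Finset.sum_mul, raise, sum_sum_antisymm_mul_antisymm, dotProduct_comm (G *ᵥ _)]
  ring

theorem wedge_dtheta_add (A B D : ℝ) :
    wedge 2 0 A + wedge 2 3 D + wedge 2 1 B
      = Matrix.of fun i j => (Pi.single 2 1 : Fin 4 → ℝ) i * ![A, B, 0, D] j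
          - ![A, B, 0, D] i * (Pi.single 2 1 : Fin 4 → ℝ) j := by
  ext i j
  fin_cases i <;> fin_cases j <;> simp [wedge]

def kerrInv (M a : ℝ) (x : Fin 4 → ℝ) : Matrix (Fin 4) (Fin 4) ℝ :=
  Matrix.of fun μ ν =>
    if μ = 0 ∧ ν = 0 then -(Sig2 M a x) / (rho2 a x * Del M a x)
    else if (μ = 0 ∧ ν = 3) ∨ (μ = 3 ∧ ν = 0) then
      -(2 * M * (x 1) * a) / (rho2 a x * Del M a x)
    else if μ = 1 ∧ ν = 1 then Del M a x / rho2 a x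
    else if μ = 2 ∧ ν = 2 then 1 / rho2 a x
    else if μ = 3 ∧ ν = 3 then
      (Del M a x - a ^ 2 * sin (x 2) ^ 2) / (rho2 a x * Del M a x * sin (x 2) ^ 2)
    else 0

section

variable {M a : ℝ} {x : Fin 4 → ℝ}

theorem rho2_eq_sub (a : ℝ) (x : Fin 4 → ℝ) :
    rho2 a x = x 1 ^ 2 + a ^ 2 - a ^ 2 * sin (x 2) ^ 2 := by
  rw [rho2, cos_sq']; ring

theorem Del_pos_of_mem_KerrExt (ha : 0 ≤ a) (haM : a < M) (hx : x ∈ KerrExt M a) :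
    0 < Del M a x := by
  have hroot : sqrt (M ^ 2 - a ^ 2) ^ 2 = M ^ 2 - a ^ 2 := sq_sqrt (by nlinarith)
  have : sqrt (M ^ 2 - a ^ 2) < x 1 - M := by linarith [hx.1]
  have : M ^ 2 - a ^ 2 < (x 1 - M) ^ 2 := by nlinarith [sqrt_nonneg (M ^ 2 - a ^ 2)]
  rw [Del]; nlinarith

theorem rho2_pos_of_mem_KerrExt (ha : 0 ≤ a) (haM : a < M) (hx : x ∈ KerrExt M a) :
    0 < rho2 a x := by
  have : 0 < x 1 := by linarith [hx.1, sqrt_nonneg (M ^ 2 - a ^ 2)]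
  rw [rho2]; positivity

theorem sin_pos_of_mem_KerrExt (hx : x ∈ KerrExt M a) : 0 < sin (x 2) :=
  sin_pos_of_pos_of_lt_pi hx.2.1 hx.2.2

theorem kerr_mul_kerrInv (hΔ : Del M a x ≠ 0) (hρ : rho2 a x ≠ 0) (hs : sin (x 2) ≠ 0) :
    kerr M a x * kerrInv M a x = 1 := by
  rw [rho2_eq_sub] at hρ
  ext i j
  fin_cases i <;> fin_cases j <;>
    simp only [kerr, kerrInv, Sig2, rho2_eq_sub, mul_apply, one_apply, of_apply, Fin.sum_univ_four,
      Fin.zero_eta, Fin.mk_one, Fin.reduceFinMk, Fin.isValue, Fin.reduceEq, true_and, false_and,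
      and_true, and_false, or_false, false_or, or_self, ↓reduceIte, mul_zero, zero_mul, add_zero,
      zero_add] <;>
    field_simp <;> simp only [Del] <;> ring

theorem inv_kerr (hΔ : Del M a x ≠ 0) (hρ : rho2 a x ≠ 0) (hs : sin (x 2) ≠ 0) :
    (kerr M a x)⁻¹ = kerrInv M a x :=
  inv_eq_right_inv (kerr_mul_kerrInv hΔ hρ hs)

theorem single_two_dotProduct_kerrInv_mulVec (v : Fin 4 → ℝ) :
    Pi.single 2 1 ⬝ᵥ kerrInv M a x *ᵥ v = v 2 / rho2 a x := by
  simp only [dotProduct, mulVec, kerrInv, Pi.single_apply, of_apply, Fin.sum_univ_four, Fin.isValue,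
    Fin.reduceEq, and_true, and_false, false_or, or_false, or_self, zero_ne_one, one_ne_zero,
    ↓reduceIte, ite_mul, one_mul, zero_mul, Finset.sum_ite_eq', Finset.mem_univ, add_zero, zero_add]
  ring

theorem dotProduct_kerrInv_mulVec_single_two (v : Fin 4 → ℝ) :
    v ⬝ᵥ kerrInv M a x *ᵥ Pi.single 2 1 = v 2 / rho2 a x := by
  simp only [dotProduct, mulVec, kerrInv, Pi.single_apply, of_apply, Fin.isValue, Fin.reduceEq,
    and_true, and_false, or_self, ↓reduceIte, mul_ite, mul_one, mul_zero, Finset.sum_ite_eq',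
    Finset.mem_univ]
  ring

theorem dotProduct_kerrInv_mulVec_principal (hΔ : Del M a x ≠ 0) (hρ : rho2 a x ≠ 0)
    (hs : sin (x 2) ≠ 0) (T R : ℝ) :
    ![T, R, 0, -(a * sin (x 2) ^ 2) * T] ⬝ᵥ kerrInv M a x *ᵥ ![T, R, 0, -(a * sin (x 2) ^ 2) * T]
      = -(rho2 a x / Del M a x) * T ^ 2 + Del M a x / rho2 a x * R ^ 2 := by
  rw [rho2_eq_sub] at hρ ⊢
  simp only [kerrInv, Sig2, rho2_eq_sub, mulVec, dotProduct, of_apply, Fin.sum_univ_four, cons_val,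
    Fin.isValue, Fin.reduceEq, and_true, and_false, or_false, false_or, or_self, ↓reduceIte,
    mul_zero, zero_mul, add_zero, zero_add]
  field_simp
  simp only [Del]
  ring

theorem dotProduct_kerr_mulVec_principal (hΔ : Del M a x ≠ 0) (hρ : rho2 a x ≠ 0) (α R : ℝ) :
    ![α * (x 1 ^ 2 + a ^ 2), R, 0, α * a] ⬝ᵥ kerr M a x *ᵥ ![α * (x 1 ^ 2 + a ^ 2), R, 0, α * a]
      = -(Del M a x * rho2 a x) * α ^ 2 + rho2 a x / Del M a x * R ^ 2 := by
  rw [rho2_eq_sub] at hρ ⊢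
  simp only [kerr, Sig2, rho2_eq_sub, mulVec, dotProduct, of_apply, Fin.sum_univ_four, cons_val,
    Fin.isValue, Fin.reduceEq, and_true, and_false, or_false, false_or, or_self, ↓reduceIte,
    mul_zero, zero_mul, add_zero, zero_add]
  field_simp
  simp only [Del]
  ring

theorem Fsq_wedge_dtheta (hΔ : Del M a x ≠ 0) (hρ : rho2 a x ≠ 0) (hs : sin (x 2) ≠ 0)
    {F : (Fin 4 → ℝ) → Matrix (Fin 4) (Fin 4) ℝ} {T R : ℝ}
    (hF : F x = wedge 2 0 T + wedge 2 3 (T * -(a * sin (x 2) ^ 2)) + wedge 2 1 R) :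
    Fsq M a F x
      = 2 / rho2 a x * (-(rho2 a x / Del M a x) * T ^ 2 + Del M a x / rho2 a x * R ^ 2) := by
  rw [Fsq, hF, wedge_dtheta_add, inv_kerr hΔ hρ hs]
  simp only [of_apply]
  rw [sum_contract_wedge, single_two_dotProduct_kerrInv_mulVec,
    dotProduct_kerrInv_mulVec_single_two, mul_comm T, dotProduct_kerrInv_mulVec_principal hΔ hρ hs]
  simp only [Pi.single_eq_same, cons_val, zero_div, mul_zero, sub_zero]
  ring

theorem Fsq_F6 {u₀ C : ℝ} {gtil : ℝ → ℝ} (hC : C ≠ 0) (hΔ : Del M a x ≠ 0)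
    (hρ : rho2 a x ≠ 0) (hs : sin (x 2) ≠ 0) :
    Fsq M a (F6 M a u₀ C gtil) x = -2 * u₀ ^ 2 / (Del M a x * sin (x 2) ^ 2) := by
  have hroot : sqrt (C ^ 2 + gtil (x 2) ^ 2) ^ 2 = C ^ 2 + gtil (x 2) ^ 2 :=
    sq_sqrt (by positivity)
  rw [Fsq_wedge_dtheta hΔ hρ hs (by rw [F6])]
  field_simp
  rw [hroot]
  ring

theorem sum_kerr_mul_j6_mul_j6 {u₀ C : ℝ} {gtil : ℝ → ℝ} (hC : C ≠ 0) (hΔ : Del M a x ≠ 0)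
    (hρ : rho2 a x ≠ 0) :
    ∑ μ, ∑ ν, kerr M a x μ ν * j6 M a u₀ C gtil x μ * j6 M a u₀ C gtil x ν
      = u₀ ^ 2 * deriv gtil (x 2) ^ 2 /
          ((gtil (x 2) ^ 2 + C ^ 2) * Del M a x * rho2 a x * sin (x 2) ^ 2) := by
  have hroot : sqrt (C ^ 2 + gtil (x 2) ^ 2) ^ 2 = C ^ 2 + gtil (x 2) ^ 2 :=
    sq_sqrt (by positivity)
  have hroot_pos : 0 < sqrt (C ^ 2 + gtil (x 2) ^ 2) := sqrt_pos.2 (by positivity)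
  have hj6 : j6 M a u₀ C gtil x = (u₀ * deriv gtil (x 2) / (C * rho2 a x * sin (x 2))) •
      ![gtil (x 2) / (Del M a x * sqrt (C ^ 2 + gtil (x 2) ^ 2)) * (x 1 ^ 2 + a ^ 2), -1, 0,
        gtil (x 2) / (Del M a x * sqrt (C ^ 2 + gtil (x 2) ^ 2)) * a] := rfl
  rw [sum_sum_mul_mul_eq_dotProduct_mulVec, hj6, mulVec_smul, dotProduct_smul, smul_dotProduct,
    dotProduct_kerr_mulVec_principal hΔ hρ, smul_eq_mul, smul_eq_mul]
  field_simp
  rw [hroot]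
  ring

end

theorem kerr_F6_invariants_general (M a u₀ C : ℝ) (ha : 0 ≤ a) (haM : a < M) (hC : 0 < C)
    (gtil : ℝ → ℝ) :
    ∀ x ∈ KerrExt M a,
      Fsq M a (F6 M a u₀ C gtil) x = -2 * u₀ ^ 2 / (Del M a x * Real.sin (x 2) ^ 2) ∧
      (u₀ ≠ 0 → Fsq M a (F6 M a u₀ C gtil) x < 0) ∧
      (∑ μ : Fin 4, ∑ ν : Fin 4,
          kerr M a x μ ν * j6 M a u₀ C gtil x μ * j6 M a u₀ C gtil x ν)
        = u₀ ^ 2 * (deriv gtil (x 2)) ^ 2 /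
            ((gtil (x 2) ^ 2 + C ^ 2) * Del M a x * rho2 a x * Real.sin (x 2) ^ 2) ∧
      0 ≤ (∑ μ : Fin 4, ∑ ν : Fin 4,
          kerr M a x μ ν * j6 M a u₀ C gtil x μ * j6 M a u₀ C gtil x ν) := by
  intro x hx
  have hΔ := Del_pos_of_mem_KerrExt ha haM hx
  have hρ := rho2_pos_of_mem_KerrExt ha haM hx
  have hs := sin_pos_of_mem_KerrExt hx
  have hF := Fsq_F6 (u₀ := u₀) (gtil := gtil) hC.ne' hΔ.ne' hρ.ne' hs.ne'
  have hj := sum_kerr_mul_j6_mul_j6 (u₀ := u₀) (gtil := gtil) hC.ne' hΔ.ne' hρ.ne'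
  refine ⟨hF, fun hu => ?_, hj, by rw [hj]; positivity⟩
  rw [hF, neg_mul, neg_div]
  exact neg_neg_of_pos (by positivity)

/-- F₆² = −2u₀²/(Δ sin²θ) (electrically dominated) and
j₆² = u₀² g̃′²/((g̃²+C²) Δ ρ² sin²θ) ≥ 0 (spacelike current). -/
theorem kerr_F6_invariants (M a u₀ C : ℝ) (ha : 0 ≤ a) (haM : a < M) (hC : 0 < C)
    (gtil : ℝ → ℝ) (hg : ContDiffOn ℝ 2 gtil (Set.Ioo 0 Real.pi)) :
    ∀ x ∈ KerrExt M a,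
      Fsq M a (F6 M a u₀ C gtil) x = -2 * u₀ ^ 2 / (Del M a x * Real.sin (x 2) ^ 2) ∧
      (u₀ ≠ 0 → Fsq M a (F6 M a u₀ C gtil) x < 0) ∧
      (∑ μ : Fin 4, ∑ ν : Fin 4,
          kerr M a x μ ν * j6 M a u₀ C gtil x μ * j6 M a u₀ C gtil x ν)
        = u₀ ^ 2 * (deriv gtil (x 2)) ^ 2 /
            ((gtil (x 2) ^ 2 + C ^ 2) * Del M a x * rho2 a x * Real.sin (x 2) ^ 2) ∧
      0 ≤ (∑ μ : Fin 4, ∑ ν : Fin 4,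
          kerr M a x μ ν * j6 M a u₀ C gtil x μ * j6 M a u₀ C gtil x ν) :=
  kerr_F6_invariants_general M a u₀ C ha haM hC gtil
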